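/- Let A be a Schur ring over a finite abelian group G = G₁ × G₂ with G₁, G₂ both A-subgroups, and suppose A restricted to G₁ equals the full group ring ℤG₁. Then A = A_{G₁} ⊗ A_{G₂}, i.e., every basic set of A is of the form X₁ × X₂ with X₁ ∈ S(A_{G₁}) and X₂ ∈ S(A_{G₂}). -/

import Mathlib

/-!
Pick `(a, b)` in a basic set `X`. Since `{(a⁻¹, 1)}` is a basic set, its translate
`(a⁻¹, 1) • X` is again a basic set; it contains `(1, b)`, so it lies in the `A`-subgroup
`1 × G₂`. Hence `X = {a} × X₂` with `1 × X₂ = (a⁻¹, 1) • X` basic, and `{(a, 1)}` is basic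
because `A_{G₁} = ℤG₁`.
-/

open scoped BigOperators

/-- The indicator element `X̲ = Σ_{x∈X} x` of a finset in the integral group ring `ℤG`. -/
noncomputable def grpInd {G : Type*} [Group G] (X : Finset G) : MonoidAlgebra ℤ G :=
  ∑ x ∈ X, MonoidAlgebra.single x (1 : ℤ)

/-- A Schur ring over a finite group `G`: a partition of `G` containing `{1}`,
closed under inverses, whose indicator elements span a subring of `ℤG`. -/
structure SchurRing (G : Type*) [Group G] [Fintype G] [DecidableEq G] where
  parts : Finset (Finset G)
  nonempty_mem : ∀ X ∈ parts, X.Nonempty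
  cover : ∀ g : G, ∃ X ∈ parts, g ∈ X
  pairwise_disjoint : ∀ X ∈ parts, ∀ Y ∈ parts, X ≠ Y → Disjoint X Y
  one_mem : ({1} : Finset G) ∈ parts
  inv_mem : ∀ X ∈ parts, X.image (·⁻¹) ∈ parts
  mul_mem : ∀ X ∈ parts, ∀ Y ∈ parts, ∃ c : Finset G → ℤ,
    grpInd X * grpInd Y = ∑ Z ∈ parts, c Z • grpInd Z

namespace SchurRing

variable {G : Type*} [Group G] [Fintype G] [DecidableEq G]

/-- The underlying `ℤ`-module of the Schur ring: the span of the indicators of basic sets. -/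
noncomputable def carrier (A : SchurRing G) : Submodule ℤ (MonoidAlgebra ℤ G) :=
  Submodule.span ℤ {v | ∃ X ∈ A.parts, v = grpInd X}

/-- `X ⊆ G` is an `A`-set if its indicator lies in `A`. -/
def IsASet (A : SchurRing G) (X : Finset G) : Prop := grpInd X ∈ A.carrier

/-- `A` is a subring of `B` (as S-rings over the same group). -/
def le (A B : SchurRing G) : Prop := ∀ X ∈ A.parts, grpInd X ∈ B.carrier

end SchurRing

/-- An algebraic isomorphism of Schur rings: a bijection of basic sets preserving all
structure constants (the structure constant `c^Z_{X,Y}` is the coefficient of the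
product `X̲·Y̲` at any `z ∈ Z`). -/
def IsAlgIso {G G' : Type*} [Group G] [Fintype G] [DecidableEq G]
    [Group G'] [Fintype G'] [DecidableEq G']
    (A : SchurRing G) (A' : SchurRing G') (φ : Finset G → Finset G') : Prop :=
  Set.BijOn φ ↑A.parts ↑A'.parts ∧
  ∀ X ∈ A.parts, ∀ Y ∈ A.parts, ∀ Z ∈ A.parts, ∀ z ∈ Z, ∀ z' ∈ φ Z,
    (grpInd X * grpInd Y).coeff z = (grpInd (φ X) * grpInd (φ Y)).coeff z'

/-- A combinatorial isomorphism of Schur rings: a bijection `G → G'` mapping basic sets to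
basic sets and inducing a Cayley graph isomorphism on each basic set. -/
def IsCombIso {G G' : Type*} [Group G] [Fintype G] [DecidableEq G]
    [Group G'] [Fintype G'] [DecidableEq G']
    (A : SchurRing G) (A' : SchurRing G') (f : G → G') : Prop :=
  Function.Bijective f ∧
  ∀ X ∈ A.parts, X.image f ∈ A'.parts ∧
    ∀ g h : G, h * g⁻¹ ∈ X ↔ f h * (f g)⁻¹ ∈ X.image f

/-- An automorphism of a Schur ring: a permutation of `G` preserving the edge set of
`Cay(G,X)` for every basic set `X`. -/
def IsSchurAut {G : Type*} [Group G] [Fintype G] [DecidableEq G]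
    (A : SchurRing G) (f : G → G) : Prop :=
  Function.Bijective f ∧ ∀ X ∈ A.parts, ∀ g h : G, h * g⁻¹ ∈ X ↔ f h * (f g)⁻¹ ∈ X

/-- Separability with respect to the class of (finite) abelian groups. -/
def SchurRing.IsSeparableAbelian {G : Type} [Group G] [Fintype G] [DecidableEq G]
    (A : SchurRing G) : Prop :=
  ∀ (G' : Type) [CommGroup G'] [Fintype G'] [DecidableEq G'],
    ∀ (A' : SchurRing G') (φ : Finset G → Finset G'),
    IsAlgIso A A' φ →
    ∃ f : G → G', IsCombIso A A' f ∧ ∀ X ∈ A.parts, φ X = X.image f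

open scoped Pointwise

lemma coeff_grpInd {G : Type*} [Group G] [DecidableEq G] (X : Finset G) (g : G) :
    (grpInd X).coeff g = if g ∈ X then 1 else 0 := by
  rw [grpInd, MonoidAlgebra.coeff_sum, Finsupp.finsetSum_apply]
  simp [MonoidAlgebra.coeff_single, Finsupp.single_apply]

lemma grpInd_smul_finset {G : Type*} [Group G] [DecidableEq G] (s : G) (X : Finset G) :
    grpInd (s • X) = grpInd {s} * grpInd X := by
  rw [grpInd, grpInd, grpInd, Finset.sum_singleton, Finset.mul_sum, Finset.smul_finset_def,
    Finset.sum_image fun _ _ _ _ h => MulAction.injective s h]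
  simp [MonoidAlgebra.single_mul_single]

namespace SchurRing

variable {G : Type*} [Group G] [Fintype G] [DecidableEq G] (A : SchurRing G)

lemma grpInd_mem_carrier {X : Finset G} (hX : X ∈ A.parts) : grpInd X ∈ A.carrier :=
  Submodule.subset_span ⟨X, hX, rfl⟩

lemma coeff_eq_of_mem_carrier {v : MonoidAlgebra ℤ G} (hv : v ∈ A.carrier)
    {Z : Finset G} (hZ : Z ∈ A.parts) {g h : G} (hg : g ∈ Z) (hh : h ∈ Z) :
    v.coeff g = v.coeff h := by
  induction hv using Submodule.span_induction with
  | mem x hx =>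
    obtain ⟨X, hX, rfl⟩ := hx
    have hXZ : ∀ {k}, k ∈ Z → (k ∈ X ↔ X = Z) := fun hk =>
      ⟨fun hkX => by_contra fun hne =>
        Finset.disjoint_left.mp (A.pairwise_disjoint X hX Z hZ hne) hkX hk, fun h => h ▸ hk⟩
    simp only [coeff_grpInd, hXZ hg, hXZ hh]
  | zero => rfl
  | add x y _ _ hx hy => simp only [MonoidAlgebra.coeff_add, Finsupp.add_apply, hx, hy]
  | smul c x _ hx => simp only [MonoidAlgebra.coeff_smul_apply, hx]

lemma subset_of_isASet {W Z : Finset G} (hW : A.IsASet W) (hZ : Z ∈ A.parts) {g : G}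
    (hgZ : g ∈ Z) (hgW : g ∈ W) : Z ⊆ W := by
  intro h hh
  have hcoeff := A.coeff_eq_of_mem_carrier hW hZ hgZ hh
  simp only [coeff_grpInd, hgW, if_true] at hcoeff
  by_contra hhW
  simp [hhW] at hcoeff

lemma isASet_smul_finset {s : G} (hs : {s} ∈ A.parts) {X : Finset G} (hX : X ∈ A.parts) :
    A.IsASet (s • X) := by
  obtain ⟨c, hc⟩ := A.mul_mem _ hs _ hX
  rw [IsASet, grpInd_smul_finset, hc]
  exact Submodule.sum_mem _ fun Z hZ => Submodule.smul_mem _ _ (A.grpInd_mem_carrier hZ)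

lemma singleton_inv_mem {s : G} (hs : {s} ∈ A.parts) : {s⁻¹} ∈ A.parts := by
  simpa using A.inv_mem _ hs

/-- The basic set `Z` through `s • x` satisfies `Z ⊆ s • X` and `s⁻¹ • Z ⊇ X`, both because
translates of basic sets by `s^{±1}` are `A`-sets. -/
lemma smul_finset_mem_parts {s : G} (hs : {s} ∈ A.parts) {X : Finset G} (hX : X ∈ A.parts) :
    s • X ∈ A.parts := by
  obtain ⟨x, hx⟩ := A.nonempty_mem X hX
  obtain ⟨Z, hZ, hsxZ⟩ := A.cover (s * x)
  have hsx : s * x ∈ s • X := Finset.smul_mem_smul_finset hx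
  have hZX : Z ⊆ s • X := A.subset_of_isASet (A.isASet_smul_finset hs hX) hZ hsxZ hsx
  have hXZ : X ⊆ s⁻¹ • Z :=
    A.subset_of_isASet (A.isASet_smul_finset (A.singleton_inv_mem hs) hZ) hX hx
      (Finset.mem_inv_smul_finset_iff.mpr hsxZ)
  rwa [(Finset.smul_finset_subset_iff.mpr hXZ).antisymm hZX]

end SchurRing

lemma Finset.eq_singleton_product_image_snd {α β : Type*} [DecidableEq β] {X : Finset (α × β)}
    {a : α} (h : ∀ p ∈ X, p.1 = a) : X = {a} ×ˢ X.image Prod.snd := by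
  ext ⟨p, q⟩
  simp only [Finset.mem_product, Finset.mem_singleton, Finset.mem_image]
  constructor
  · exact fun hpq => ⟨h _ hpq, _, hpq, rfl⟩
  · rintro ⟨rfl, ⟨p', q'⟩, hpq', rfl⟩
    rwa [← h _ hpq']

section Product

variable {G₁ G₂ : Type*} [Group G₁] [Group G₂] [DecidableEq G₁] [DecidableEq G₂]

lemma image_snd_image_eq_smul_finset {X : Finset (G₁ × G₂)} {a : G₁} (h : ∀ p ∈ X, p.1 = a) :
    (X.image Prod.snd).image (fun g => ((1 : G₁), g)) = ((a⁻¹, 1) : G₁ × G₂) • X := by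
  rw [Finset.image_image, Finset.smul_finset_def]
  refine Finset.image_congr fun p hp => Prod.ext ?_ (one_mul p.2).symm
  simp [h p hp]

variable [Fintype G₁] [Fintype G₂] (A : SchurRing (G₁ × G₂))

lemma SchurRing.fst_eq_of_mem_parts
    (h₂ : A.IsASet (Finset.univ.image (fun g : G₂ => ((1 : G₁), g)))) {a : G₁} {b : G₂}
    (ha : ({(a⁻¹, 1)} : Finset (G₁ × G₂)) ∈ A.parts) {X : Finset (G₁ × G₂)}
    (hX : X ∈ A.parts) (hab : (a, b) ∈ X) : ∀ p ∈ X, p.1 = a := by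
  have h1b : ((1 : G₁), b) ∈ ((a⁻¹, 1) : G₁ × G₂) • X := by
    simpa using Finset.smul_mem_smul_finset (a := ((a⁻¹, 1) : G₁ × G₂)) hab
  have hsub := A.subset_of_isASet h₂ (A.smul_finset_mem_parts ha hX) h1b (by simp)
  intro p hp
  obtain ⟨g, -, hg⟩ := Finset.mem_image.mp (hsub (Finset.smul_mem_smul_finset hp))
  have : a⁻¹ * p.1 = 1 := by simpa using (congrArg Prod.fst hg).symm
  exact (inv_mul_eq_one.mp this).symm

end Product

theorem stmt10_general {G₁ G₂ : Type*} [CommGroup G₁] [CommGroup G₂]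
    [Fintype G₁] [Fintype G₂] [DecidableEq G₁] [DecidableEq G₂]
    (A : SchurRing (G₁ × G₂))
    (h₂ : A.IsASet (Finset.univ.image (fun g : G₂ => ((1 : G₁), g))))
    (hZ : ∀ g : G₁, ({(g, (1 : G₂))} : Finset (G₁ × G₂)) ∈ A.parts) :
    ∀ X ∈ A.parts, ∃ X₁ : Finset G₁, ∃ X₂ : Finset G₂,
      X = X₁ ×ˢ X₂ ∧
      X₁.image (fun g : G₁ => (g, (1 : G₂))) ∈ A.parts ∧
      X₂.image (fun g : G₂ => ((1 : G₁), g)) ∈ A.parts := by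
  intro X hX
  obtain ⟨⟨a, b⟩, hab⟩ := A.nonempty_mem X hX
  have hfst := A.fst_eq_of_mem_parts h₂ (hZ a⁻¹) hX hab
  refine ⟨{a}, X.image Prod.snd, Finset.eq_singleton_product_image_snd hfst, by simpa using hZ a,
    ?_⟩
  rw [image_snd_image_eq_smul_finset hfst]
  exact A.smul_finset_mem_parts (hZ a⁻¹) hX

/-- if `G = G₁ × G₂` with `G₁`, `G₂` both `A`-subgroups and `A_{G₁} = ℤG₁`
(every element of `G₁` is a singleton basic set), then `A = A_{G₁} ⊗ A_{G₂}`: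
every basic set is a product `X₁ × X₂` of basic sets of the induced S-rings. -/
theorem stmt10 {G₁ G₂ : Type*} [CommGroup G₁] [CommGroup G₂]
    [Fintype G₁] [Fintype G₂] [DecidableEq G₁] [DecidableEq G₂]
    (A : SchurRing (G₁ × G₂))
    (h₁ : A.IsASet (Finset.univ.image (fun g : G₁ => (g, (1 : G₂)))))
    (h₂ : A.IsASet (Finset.univ.image (fun g : G₂ => ((1 : G₁), g))))
    (hZ : ∀ g : G₁, ({(g, (1 : G₂))} : Finset (G₁ × G₂)) ∈ A.parts) :
    ∀ X ∈ A.parts, ∃ X₁ : Finset G₁, ∃ X₂ : Finset G₂,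
      X = X₁ ×ˢ X₂ ∧
      X₁.image (fun g : G₁ => (g, (1 : G₂))) ∈ A.parts ∧
      X₂.image (fun g : G₂ => ((1 : G₁), g)) ∈ A.parts :=
  stmt10_general A h₂ hZ
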